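/- arXiv:1711.11431 — 6 statements merged into one kernel-verified Lean document; each statement's English description precedes it below -/
import Mathlib

section
/- Suppose M : [0,l] → ℝ is differentiable, takes values in (0,1), and solves dM/dx = μ(γ+1)M³/(2(1−M²)) on [0,l] with M(0) = M₀ and M(l) = M₁, where γ > 1 and μ > 0. Then l = (1/M₀² − 1/M₁² + ln M₀² − ln M₁²)/(μ(γ+1)). -/
/-!
The function `F(m) = 1/m² + log m²` has `F'(m) = -2(1 - m²)/m³`, which is exactly `-c` times the
reciprocal of the right-hand side `c m³ / (2(1 - m²))` of the Fanno equation. Hence `F(M(x)) + c x`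
has zero derivative, so `F(M₀) - F(M₁) = c l`.
-/

open Real Set

noncomputable def fannoPotential (m : ℝ) : ℝ := 1 / m ^ 2 + log (m ^ 2)

lemma hasDerivAt_fannoPotential {m : ℝ} (hm : m ≠ 0) :
    HasDerivAt fannoPotential (-2 * (1 - m ^ 2) / m ^ 3) m := by
  have hsq : HasDerivAt (fun y : ℝ => y ^ 2) (2 * m) m := by
    simpa using hasDerivAt_pow 2 m
  have hm2 : m ^ 2 ≠ 0 := pow_ne_zero 2 hm
  refine (((hasDerivAt_const m (1 : ℝ)).div hsq hm2).add (hsq.log hm2)).congr_deriv ?_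
  field_simp
  ring

lemma hasDerivAt_fannoPotential_comp_add_mul {M : ℝ → ℝ} {c x : ℝ} (hM : M x ≠ 0)
    (hM' : 1 - M x ^ 2 ≠ 0) (hode : HasDerivAt M (c * M x ^ 3 / (2 * (1 - M x ^ 2))) x) :
    HasDerivAt (fun y => fannoPotential (M y) + c * y) 0 x := by
  refine (((hasDerivAt_fannoPotential hM).comp x hode).add
    ((hasDerivAt_id x).const_mul c)).congr_deriv ?_
  field_simp
  ring

theorem fannoPotential_sub_eq_of_hasDerivAt {M : ℝ → ℝ} {c a b : ℝ} (hab : a ≤ b)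
    (hM : ∀ x ∈ Icc a b, M x ≠ 0 ∧ 1 - M x ^ 2 ≠ 0)
    (hode : ∀ x ∈ Icc a b, HasDerivAt M (c * M x ^ 3 / (2 * (1 - M x ^ 2))) x) :
    fannoPotential (M a) - fannoPotential (M b) = c * (b - a) := by
  have hderiv (x) (hx : x ∈ Icc a b) :=
    hasDerivAt_fannoPotential_comp_add_mul (hM x hx).1 (hM x hx).2 (hode x hx)
  have hconst := constant_of_has_deriv_right_zero
    (fun x hx => (hderiv x hx).continuousAt.continuousWithinAt)
    (fun x hx => (hderiv x (Ico_subset_Icc_self hx)).hasDerivWithinAt) b (right_mem_Icc.2 hab)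
  linarith

theorem fanno_duct_length_formula
    (γ μ l M₀ M₁ : ℝ) (hγ : 1 < γ) (hμ : 0 < μ) (hl : 0 ≤ l)
    (M : ℝ → ℝ)
    (hrange : ∀ x ∈ Set.Icc 0 l, M x ∈ Set.Ioo (0 : ℝ) 1)
    (hode : ∀ x ∈ Set.Icc 0 l,
      HasDerivAt M (μ * (γ + 1) * (M x) ^ 3 / (2 * (1 - (M x) ^ 2))) x)
    (h0 : M 0 = M₀) (h1 : M l = M₁) :
    l = (1 / M₀ ^ 2 - 1 / M₁ ^ 2 + Real.log (M₀ ^ 2) - Real.log (M₁ ^ 2)) /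
          (μ * (γ + 1)) := by
  have hc : μ * (γ + 1) ≠ 0 := (mul_pos hμ (by linarith)).ne'
  have hM (x) (hx : x ∈ Icc 0 l) : M x ≠ 0 ∧ 1 - M x ^ 2 ≠ 0 := by
    obtain ⟨hpos, hlt1⟩ := hrange x hx
    exact ⟨hpos.ne', by nlinarith⟩
  have key := fannoPotential_sub_eq_of_hasDerivAt hl hM hode
  rw [h0, h1, fannoPotential, fannoPotential, sub_zero] at key
  rw [eq_div_iff hc]
  linarith
end

section
/- Suppose ρ, u, p : [0,L] → ℝ are differentiable with ρ > 0, u > 0, p > 0, and satisfy the one-dimensional Fanno system (ρu)' = 0, (ρu² + p)' = −μρu², and (ρ(u²/2 + γp/((γ−1)ρ))u)' = −μρu³, where the sound speed c = √(γp/ρ) satisfies u ≠ c everywhere. Then u' = μuM²/(1−M²), where M² = u²/c² = ρu²/(γp). -/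
/-!
Mass conservation says `ρu` is constant, so the momentum and energy balances reduce to
`ρ u u' + p' = -μρu²` and `ρ u² u' + γ/(γ-1) (p u)' = -μρu³`. Eliminating `p'` between them
leaves `u' (γp - ρu²) = μρu³`, and dividing by `γp - ρu² = γp (1 - M²) ≠ 0` gives the claim.
-/

open Filter Topology

namespace Fanno

section Balances

variable {ρ u p : ℝ → ℝ} {ρ' u' p' f x : ℝ}

theorem mass_balance (hρ : HasDerivAt ρ ρ' x) (hu : HasDerivAt u u' x)
    (h : HasDerivAt (fun y => ρ y * u y) f x) : ρ' * u x + ρ x * u' = f :=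
  (hρ.mul hu).unique h

theorem momentum_balance (hρ : HasDerivAt ρ ρ' x) (hu : HasDerivAt u u' x)
    (hp : HasDerivAt p p' x) (h : HasDerivAt (fun y => ρ y * u y ^ 2 + p y) f x) :
    ρ' * u x ^ 2 + 2 * ρ x * u x * u' + p' = f := by
  have := ((hρ.mul (hu.fun_pow 2)).add hp).unique h
  rw [← this]
  ring

theorem energy_flux_eventuallyEq (γ : ℝ) (hρ : ContinuousAt ρ x) (hρx : ρ x ≠ 0) :
    (fun y => ρ y * (u y ^ 2 / 2 + γ * p y / ((γ - 1) * ρ y)) * u y) =ᶠ[𝓝 x]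
      fun y => ρ y * u y ^ 3 / 2 + γ / (γ - 1) * (p y * u y) := by
  filter_upwards [hρ.eventually_ne hρx] with y hy
  have hcancel : ρ y * (p y / ρ y) = p y := mul_div_cancel₀ _ hy
  rw [mul_div_mul_comm]
  linear_combination γ / (γ - 1) * u y * hcancel

theorem energy_balance (γ : ℝ) (hρ : HasDerivAt ρ ρ' x) (hu : HasDerivAt u u' x)
    (hp : HasDerivAt p p' x) (hρx : ρ x ≠ 0)
    (h : HasDerivAt (fun y => ρ y * (u y ^ 2 / 2 + γ * p y / ((γ - 1) * ρ y)) * u y) f x) :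
    ρ' * u x ^ 3 / 2 + 3 / 2 * ρ x * u x ^ 2 * u' + γ / (γ - 1) * (p' * u x + p x * u') =
      f := by
  have h' := h.congr_of_eventuallyEq (energy_flux_eventuallyEq γ hρ.continuousAt hρx).symm
  have := (((hρ.mul (hu.fun_pow 3)).div_const 2).add
    ((hp.mul hu).const_mul (γ / (γ - 1)))).unique h'
  rw [← this]
  ring

end Balances

theorem velocity_deriv_mul_eq {γ μ ρ u p ρ' u' p' : ℝ} (hγ : γ ≠ 1)
    (hmass : ρ' * u + ρ * u' = 0)
    (hmom : ρ' * u ^ 2 + 2 * ρ * u * u' + p' = -(μ * ρ * u ^ 2))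
    (hener : ρ' * u ^ 3 / 2 + 3 / 2 * ρ * u ^ 2 * u' + γ / (γ - 1) * (p' * u + p * u') =
      -(μ * ρ * u ^ 3)) :
    u' * (γ * p - ρ * u ^ 2) = μ * ρ * u ^ 3 := by
  have hγ' : γ - 1 ≠ 0 := sub_ne_zero.mpr hγ
  field_simp at hener
  linear_combination (hener - 2 * γ * u * hmom + (γ + 1) * u ^ 2 * hmass) / 2

theorem velocity_deriv_eq_of_mul_eq {γ μ ρ u p u' : ℝ} (hγp : γ * p ≠ 0)
    (hM : ρ * u ^ 2 / (γ * p) ≠ 1) (h : u' * (γ * p - ρ * u ^ 2) = μ * ρ * u ^ 3) :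
    u' = μ * u * (ρ * u ^ 2 / (γ * p)) / (1 - ρ * u ^ 2 / (γ * p)) := by
  have hgap : γ * p - ρ * u ^ 2 ≠ 0 := by
    intro h0
    exact hM ((div_eq_one_iff_eq hγp).mpr (by linarith))
  rw [one_sub_div hγp, mul_div_assoc', div_div_div_cancel_right₀ hγp, eq_div_iff hgap, h]
  ring

end Fanno

theorem fanno_velocity_ode_general
    (γ μ L : ℝ) (hγ : 1 < γ)
    (ρ u p ρ' u' p' : ℝ → ℝ)
    (hρpos : ∀ x ∈ Set.Icc 0 L, 0 < ρ x)
    (hppos : ∀ x ∈ Set.Icc 0 L, 0 < p x)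
    (hρ : ∀ x ∈ Set.Icc 0 L, HasDerivAt ρ (ρ' x) x)
    (hu : ∀ x ∈ Set.Icc 0 L, HasDerivAt u (u' x) x)
    (hp : ∀ x ∈ Set.Icc 0 L, HasDerivAt p (p' x) x)
    (hM : ∀ x ∈ Set.Icc 0 L, ρ x * (u x) ^ 2 / (γ * p x) ≠ 1)
    (hmass : ∀ x ∈ Set.Icc 0 L, HasDerivAt (fun y => ρ y * u y) 0 x)
    (hmom : ∀ x ∈ Set.Icc 0 L,
      HasDerivAt (fun y => ρ y * (u y) ^ 2 + p y) (-(μ * ρ x * (u x) ^ 2)) x)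
    (hener : ∀ x ∈ Set.Icc 0 L,
      HasDerivAt (fun y => ρ y * ((u y) ^ 2 / 2 + γ * p y / ((γ - 1) * ρ y)) * u y)
        (-(μ * ρ x * (u x) ^ 3)) x) :
    ∀ x ∈ Set.Icc 0 L,
      u' x = μ * u x * (ρ x * (u x) ^ 2 / (γ * p x)) /
        (1 - ρ x * (u x) ^ 2 / (γ * p x)) := by
  intro x hx
  have hmass' := Fanno.mass_balance (hρ x hx) (hu x hx) (hmass x hx)
  have hmom' := Fanno.momentum_balance (hρ x hx) (hu x hx) (hp x hx) (hmom x hx)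
  have hener' :=
    Fanno.energy_balance γ (hρ x hx) (hu x hx) (hp x hx) (hρpos x hx).ne' (hener x hx)
  have hγp : γ * p x ≠ 0 := (mul_pos (by linarith) (hppos x hx)).ne'
  exact Fanno.velocity_deriv_eq_of_mul_eq hγp (hM x hx)
    (Fanno.velocity_deriv_mul_eq hγ.ne' hmass' hmom' hener')

theorem fanno_velocity_ode
    (γ μ L : ℝ) (hγ : 1 < γ) (hμ : 0 < μ)
    (ρ u p ρ' u' p' : ℝ → ℝ)
    (hρpos : ∀ x ∈ Set.Icc 0 L, 0 < ρ x)
    (hupos : ∀ x ∈ Set.Icc 0 L, 0 < u x)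
    (hppos : ∀ x ∈ Set.Icc 0 L, 0 < p x)
    (hρ : ∀ x ∈ Set.Icc 0 L, HasDerivAt ρ (ρ' x) x)
    (hu : ∀ x ∈ Set.Icc 0 L, HasDerivAt u (u' x) x)
    (hp : ∀ x ∈ Set.Icc 0 L, HasDerivAt p (p' x) x)
    (hM : ∀ x ∈ Set.Icc 0 L, ρ x * (u x) ^ 2 / (γ * p x) ≠ 1)
    (hmass : ∀ x ∈ Set.Icc 0 L, HasDerivAt (fun y => ρ y * u y) 0 x)
    (hmom : ∀ x ∈ Set.Icc 0 L,
      HasDerivAt (fun y => ρ y * (u y) ^ 2 + p y) (-(μ * ρ x * (u x) ^ 2)) x)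
    (hener : ∀ x ∈ Set.Icc 0 L,
      HasDerivAt (fun y => ρ y * ((u y) ^ 2 / 2 + γ * p y / ((γ - 1) * ρ y)) * u y)
        (-(μ * ρ x * (u x) ^ 3)) x) :
    ∀ x ∈ Set.Icc 0 L,
      u' x = μ * u x * (ρ x * (u x) ^ 2 / (γ * p x)) /
        (1 - ρ x * (u x) ^ 2 / (γ * p x)) :=
  fanno_velocity_ode_general γ μ L hγ ρ u p ρ' u' p' hρpos hppos hρ hu hp hM hmass hmom hener
end

section
/- Under the same hypotheses (1-D Fanno system with M ≠ 1), the density satisfies ρ' = μρM²/(M²−1) and the pressure satisfies p' = μγpM²/(M²−1). -/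
/-!
At each point the three conservation laws are linear in `(ρ', u', p')`. Mass conservation gives
`ρ u' = -ρ' u`; with it, momentum gives `p' = u² ρ' - μ ρ u²`, and the energy flux `(ρ u) H`, where
`H = u²/2 + γ p / ((γ - 1) ρ)` is the stagnation enthalpy, gives `H' = -μ u²`. Eliminating `u'` and
`p'` leaves `ρ' (ρ u² - γ p) = μ ρ² u²`, i.e. `ρ' (M² - 1) = μ ρ M²`, which is solvable exactly
because `M² ≠ 1`; the pressure equation follows from the momentum relation.
-/

noncomputable def stagnationEnthalpy (γ ρ u p : ℝ) : ℝ :=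
  u ^ 2 / 2 + γ * p / ((γ - 1) * ρ)

section ConservationLaws

variable {ρ u p H : ℝ → ℝ} {ρ' u' p' H' μ x : ℝ}

theorem mass_flux_deriv_eq_zero (hρ : HasDerivAt ρ ρ' x) (hu : HasDerivAt u u' x)
    (hmass : HasDerivAt (fun y => ρ y * u y) 0 x) : ρ' * u x + ρ x * u' = 0 :=
  (hρ.mul hu).unique hmass

theorem momentum_deriv_eq (hρ : HasDerivAt ρ ρ' x) (hu : HasDerivAt u u' x)
    (hp : HasDerivAt p p' x) (hmass : ρ' * u x + ρ x * u' = 0)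
    (hmom : HasDerivAt (fun y => ρ y * u y ^ 2 + p y) (-(μ * ρ x * u x ^ 2)) x) :
    p' = ρ' * u x ^ 2 - μ * ρ x * u x ^ 2 := by
  have h := ((hρ.mul (hu.pow 2)).add hp).unique hmom
  simp only [Pi.pow_apply, Nat.cast_ofNat, Nat.reduceSub, pow_one] at h
  linear_combination h - 2 * u x * hmass

/-- Since `(ρ u)' = 0`, the product rule leaves only `ρ u H'` in the derivative of `ρ H u`. -/
theorem deriv_eq_of_mass_flux_mul (hρ : HasDerivAt ρ ρ' x) (hu : HasDerivAt u u' x)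
    (hH : HasDerivAt H H' x) (hmass : ρ' * u x + ρ x * u' = 0)
    (hflux : HasDerivAt (fun y => ρ y * H y * u y) (-(μ * ρ x * u x ^ 3)) x)
    (hρu : ρ x * u x ≠ 0) : H' = -(μ * u x ^ 2) := by
  have h := ((hρ.mul hH).mul hu).unique hflux
  simp only [Pi.mul_apply] at h
  apply mul_left_cancel₀ hρu
  linear_combination h - H x * hmass

theorem hasDerivAt_stagnationEnthalpy {γ : ℝ} (hγ : γ ≠ 1) (hρ : HasDerivAt ρ ρ' x)
    (hu : HasDerivAt u u' x) (hp : HasDerivAt p p' x) (hρ0 : ρ x ≠ 0) :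
    HasDerivAt (fun y => stagnationEnthalpy γ (ρ y) (u y) (p y))
      (u x * u' + γ / (γ - 1) * ((p' * ρ x - p x * ρ') / ρ x ^ 2)) x := by
  have hγ1 : γ - 1 ≠ 0 := sub_ne_zero.mpr hγ
  refine (((hu.pow 2).div_const 2).add
    ((hp.const_mul γ).div (hρ.const_mul (γ - 1)) (mul_ne_zero hγ1 hρ0))).congr_deriv ?_
  field_simp
  ring

end ConservationLaws

theorem fanno_density_relation {γ μ ρ u p ρ' u' p' : ℝ} (hγ : γ ≠ 1) (hρ : ρ ≠ 0)
    (hmass : ρ' * u + ρ * u' = 0) (hmom : p' = ρ' * u ^ 2 - μ * ρ * u ^ 2)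
    (henergy : u * u' + γ / (γ - 1) * ((p' * ρ - p * ρ') / ρ ^ 2) = -(μ * u ^ 2)) :
    ρ' * (ρ * u ^ 2 - γ * p) = μ * ρ * (ρ * u ^ 2) := by
  have hγ1 : γ - 1 ≠ 0 := sub_ne_zero.mpr hγ
  have hu' : u' = -(ρ' * u / ρ) := by field_simp; linear_combination hmass
  subst hu' hmom
  field_simp at henergy
  linear_combination henergy

theorem eq_mul_div_sub_one_of_mul_sub_eq {a c X K : ℝ} (hc : c ≠ 0) (hac : a / c ≠ 1)
    (h : X * (a - c) = K * a) : X = K * (a / c) / (a / c - 1) := by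
  rw [eq_div_iff (sub_ne_zero.mpr hac)]
  field_simp
  linear_combination h

theorem fanno_density_pressure_ode_general
    (γ μ L : ℝ) (hγ : 1 < γ)
    (ρ u p ρ' u' p' : ℝ → ℝ)
    (hρpos : ∀ x ∈ Set.Icc 0 L, 0 < ρ x)
    (hupos : ∀ x ∈ Set.Icc 0 L, 0 < u x)
    (hppos : ∀ x ∈ Set.Icc 0 L, 0 < p x)
    (hρ : ∀ x ∈ Set.Icc 0 L, HasDerivAt ρ (ρ' x) x)
    (hu : ∀ x ∈ Set.Icc 0 L, HasDerivAt u (u' x) x)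
    (hp : ∀ x ∈ Set.Icc 0 L, HasDerivAt p (p' x) x)
    (hM : ∀ x ∈ Set.Icc 0 L, ρ x * (u x) ^ 2 / (γ * p x) ≠ 1)
    (hmass : ∀ x ∈ Set.Icc 0 L, HasDerivAt (fun y => ρ y * u y) 0 x)
    (hmom : ∀ x ∈ Set.Icc 0 L,
      HasDerivAt (fun y => ρ y * (u y) ^ 2 + p y) (-(μ * ρ x * (u x) ^ 2)) x)
    (hener : ∀ x ∈ Set.Icc 0 L,
      HasDerivAt (fun y => ρ y * ((u y) ^ 2 / 2 + γ * p y / ((γ - 1) * ρ y)) * u y)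
        (-(μ * ρ x * (u x) ^ 3)) x) :
    ∀ x ∈ Set.Icc 0 L,
      ρ' x = μ * ρ x * (ρ x * (u x) ^ 2 / (γ * p x)) /
        (ρ x * (u x) ^ 2 / (γ * p x) - 1) ∧
      p' x = μ * γ * p x * (ρ x * (u x) ^ 2 / (γ * p x)) /
        (ρ x * (u x) ^ 2 / (γ * p x) - 1) := by
  intro x hx
  have hρ0 := (hρpos x hx).ne'
  have hu0 := (hupos x hx).ne'
  have hγp : γ * p x ≠ 0 := mul_ne_zero (by positivity) (hppos x hx).ne'
  have mass := mass_flux_deriv_eq_zero (hρ x hx) (hu x hx) (hmass x hx)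
  have mom := momentum_deriv_eq (hρ x hx) (hu x hx) (hp x hx) mass (hmom x hx)
  have energy := deriv_eq_of_mass_flux_mul (hρ x hx) (hu x hx)
    (hasDerivAt_stagnationEnthalpy hγ.ne' (hρ x hx) (hu x hx) (hp x hx) hρ0) mass (hener x hx)
    (mul_ne_zero hρ0 hu0)
  have density := fanno_density_relation hγ.ne' hρ0 mass mom energy
  refine ⟨eq_mul_div_sub_one_of_mul_sub_eq hγp (hM x hx) density,
    eq_mul_div_sub_one_of_mul_sub_eq hγp (hM x hx) ?_⟩
  linear_combination (ρ x * u x ^ 2 - γ * p x) * mom + u x ^ 2 * density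

theorem fanno_density_pressure_ode
    (γ μ L : ℝ) (hγ : 1 < γ) (hμ : 0 < μ)
    (ρ u p ρ' u' p' : ℝ → ℝ)
    (hρpos : ∀ x ∈ Set.Icc 0 L, 0 < ρ x)
    (hupos : ∀ x ∈ Set.Icc 0 L, 0 < u x)
    (hppos : ∀ x ∈ Set.Icc 0 L, 0 < p x)
    (hρ : ∀ x ∈ Set.Icc 0 L, HasDerivAt ρ (ρ' x) x)
    (hu : ∀ x ∈ Set.Icc 0 L, HasDerivAt u (u' x) x)
    (hp : ∀ x ∈ Set.Icc 0 L, HasDerivAt p (p' x) x)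
    (hM : ∀ x ∈ Set.Icc 0 L, ρ x * (u x) ^ 2 / (γ * p x) ≠ 1)
    (hmass : ∀ x ∈ Set.Icc 0 L, HasDerivAt (fun y => ρ y * u y) 0 x)
    (hmom : ∀ x ∈ Set.Icc 0 L,
      HasDerivAt (fun y => ρ y * (u y) ^ 2 + p y) (-(μ * ρ x * (u x) ^ 2)) x)
    (hener : ∀ x ∈ Set.Icc 0 L,
      HasDerivAt (fun y => ρ y * ((u y) ^ 2 / 2 + γ * p y / ((γ - 1) * ρ y)) * u y)
        (-(μ * ρ x * (u x) ^ 3)) x) :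
    ∀ x ∈ Set.Icc 0 L,
      ρ' x = μ * ρ x * (ρ x * (u x) ^ 2 / (γ * p x)) /
        (ρ x * (u x) ^ 2 / (γ * p x) - 1) ∧
      p' x = μ * γ * p x * (ρ x * (u x) ^ 2 / (γ * p x)) /
        (ρ x * (u x) ^ 2 / (γ * p x) - 1) :=
  fanno_density_pressure_ode_general γ μ L hγ ρ u p ρ' u' p' hρpos hupos hppos hρ hu hp hM hmass
    hmom hener
end

section
/- Under the 1-D Fanno system, the Bernoulli quantity E = u²/2 + γp/((γ−1)ρ) satisfies E' = −μu², and moreover −μu² = −(2μ(γ−1)M²/((γ−1)M²+2))·E, i.e. E' = −2μ(γ−1)M² E/((γ−1)M²+2). -/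
/-!
Since `(ρu)' = 0`, the energy equation `(ρuE)' = -μρu³` reads `ρu E' = -μρu³`, and dividing by
`ρu ≠ 0` gives `E' = -μu²`. The second identity is pure algebra: with `M² = ρu²/(γp)` one has
`E = γp((γ-1)M² + 2)/(2(γ-1)ρ)`, and the factor `(γ-1)M² + 2` cancels.
-/

open Filter Topology

theorem HasDerivAt.of_mul_of_ne_zero {𝕜 : Type*} [NontriviallyNormedField 𝕜] {f g : 𝕜 → 𝕜}
    {x g' h' : 𝕜} (hg : HasDerivAt g g' x) (hgf : HasDerivAt (fun y => g y * f y) h' x)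
    (hgx : g x ≠ 0) : HasDerivAt f ((h' - g' * f x) / g x) x := by
  have hquot : (fun y => g y * f y / g y) =ᶠ[𝓝 x] f := by
    filter_upwards [hg.continuousAt.eventually_ne hgx] with y hy
    exact mul_div_cancel_left₀ (f y) hy
  refine ((hgf.div hg hgx).congr_of_eventuallyEq hquot.symm).congr_deriv ?_
  field_simp

namespace Fanno

noncomputable def bernoulliQuantity (γ ρ u p : ℝ) : ℝ := u ^ 2 / 2 + γ * p / ((γ - 1) * ρ)

noncomputable def machSq (γ ρ u p : ℝ) : ℝ := ρ * u ^ 2 / (γ * p)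

theorem sq_eq_machSq_mul_bernoulliQuantity {γ ρ u p : ℝ} (hγ : 1 < γ) (hρ : 0 < ρ) (hp : 0 < p) :
    u ^ 2 = 2 * (γ - 1) * machSq γ ρ u p / ((γ - 1) * machSq γ ρ u p + 2) *
      bernoulliQuantity γ ρ u p := by
  have hγ1 : 0 < γ - 1 := by linarith
  have hM : 0 < (γ - 1) * (ρ * u ^ 2) + 2 * (γ * p) := by positivity
  unfold machSq bernoulliQuantity
  field_simp

theorem hasDerivAt_bernoulliQuantity {γ μ x : ℝ} {ρ u p : ℝ → ℝ} (hρu : ρ x * u x ≠ 0)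
    (hmass : HasDerivAt (fun y => ρ y * u y) 0 x)
    (hener : HasDerivAt (fun y => ρ y * bernoulliQuantity γ (ρ y) (u y) (p y) * u y)
      (-(μ * ρ x * u x ^ 3)) x) :
    HasDerivAt (fun y => bernoulliQuantity γ (ρ y) (u y) (p y)) (-(μ * u x ^ 2)) x := by
  have hener' : HasDerivAt (fun y => ρ y * u y * bernoulliQuantity γ (ρ y) (u y) (p y))
      (-(μ * ρ x * u x ^ 3)) x := by
    convert hener using 2 with y
    ring
  refine (hmass.of_mul_of_ne_zero hener' hρu).congr_deriv ?_
  rw [zero_mul, sub_zero, div_eq_iff hρu]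
  ring

end Fanno

open Fanno in
theorem fanno_bernoulli_ode_general
    (γ μ L : ℝ) (hγ : 1 < γ)
    (ρ u p : ℝ → ℝ)
    (hρpos : ∀ x ∈ Set.Icc 0 L, 0 < ρ x)
    (hupos : ∀ x ∈ Set.Icc 0 L, 0 < u x)
    (hppos : ∀ x ∈ Set.Icc 0 L, 0 < p x)
    (hmass : ∀ x ∈ Set.Icc 0 L, HasDerivAt (fun y => ρ y * u y) 0 x)
    (hener : ∀ x ∈ Set.Icc 0 L,
      HasDerivAt (fun y => ρ y * ((u y) ^ 2 / 2 + γ * p y / ((γ - 1) * ρ y)) * u y)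
        (-(μ * ρ x * (u x) ^ 3)) x) :
    ∀ x ∈ Set.Icc 0 L,
      HasDerivAt (fun y => (u y) ^ 2 / 2 + γ * p y / ((γ - 1) * ρ y))
        (-(μ * (u x) ^ 2)) x ∧
      -(μ * (u x) ^ 2) =
        -(2 * μ * (γ - 1) * (ρ x * (u x) ^ 2 / (γ * p x)) /
            ((γ - 1) * (ρ x * (u x) ^ 2 / (γ * p x)) + 2)) *
          ((u x) ^ 2 / 2 + γ * p x / ((γ - 1) * ρ x)) := by
  intro x hx
  have hρu : ρ x * u x ≠ 0 := (mul_pos (hρpos x hx) (hupos x hx)).ne'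
  refine ⟨hasDerivAt_bernoulliQuantity hρu (hmass x hx) (hener x hx), ?_⟩
  have hsq := sq_eq_machSq_mul_bernoulliQuantity (u := u x) hγ (hρpos x hx) (hppos x hx)
  unfold machSq bernoulliQuantity at hsq
  linear_combination (-μ) * hsq

theorem fanno_bernoulli_ode
    (γ μ L : ℝ) (hγ : 1 < γ) (hμ : 0 < μ)
    (ρ u p ρ' u' p' : ℝ → ℝ)
    (hρpos : ∀ x ∈ Set.Icc 0 L, 0 < ρ x)
    (hupos : ∀ x ∈ Set.Icc 0 L, 0 < u x)
    (hppos : ∀ x ∈ Set.Icc 0 L, 0 < p x)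
    (hρ : ∀ x ∈ Set.Icc 0 L, HasDerivAt ρ (ρ' x) x)
    (hu : ∀ x ∈ Set.Icc 0 L, HasDerivAt u (u' x) x)
    (hp : ∀ x ∈ Set.Icc 0 L, HasDerivAt p (p' x) x)
    (hmass : ∀ x ∈ Set.Icc 0 L, HasDerivAt (fun y => ρ y * u y) 0 x)
    (hmom : ∀ x ∈ Set.Icc 0 L,
      HasDerivAt (fun y => ρ y * (u y) ^ 2 + p y) (-(μ * ρ x * (u x) ^ 2)) x)
    (hener : ∀ x ∈ Set.Icc 0 L,
      HasDerivAt (fun y => ρ y * ((u y) ^ 2 / 2 + γ * p y / ((γ - 1) * ρ y)) * u y)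
        (-(μ * ρ x * (u x) ^ 3)) x) :
    ∀ x ∈ Set.Icc 0 L,
      HasDerivAt (fun y => (u y) ^ 2 / 2 + γ * p y / ((γ - 1) * ρ y))
        (-(μ * (u x) ^ 2)) x ∧
      -(μ * (u x) ^ 2) =
        -(2 * μ * (γ - 1) * (ρ x * (u x) ^ 2 / (γ * p x)) /
            ((γ - 1) * (ρ x * (u x) ^ 2 / (γ * p x)) + 2)) *
          ((u x) ^ 2 / 2 + γ * p x / ((γ - 1) * ρ x)) :=
  fanno_bernoulli_ode_general γ μ L hγ ρ u p hρpos hupos hppos hmass hener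
end

section
/- Under the 1-D Fanno system with M ≠ 1, the entropy function A = p/ρ^γ is constant: A' = 0 along the flow. -/
/-!
Write `m = ρ u` for the mass flux and `h = γ p / ((γ - 1) ρ)` for the enthalpy. Since `m' = 0`,
the momentum and energy equations read `m u' + p' = -μ ρ u²` and `m (u u' + h') = -μ ρ u³`;
multiplying the first by `u` and subtracting, the friction terms cancel and `ρ h' = p'`.
For the ideal-gas enthalpy this Gibbs relation is exactly `p' ρ = γ p ρ'`, i.e. `(p / ρ^γ)' = 0`.
-/

theorem hasDerivAt_div_rpow_eq_zero {p ρ : ℝ → ℝ} {p' ρ' γ x : ℝ} (hρx : 0 < ρ x)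
    (hp : HasDerivAt p p' x) (hρ : HasDerivAt ρ ρ' x) (hrel : p' * ρ x = γ * p x * ρ') :
    HasDerivAt (fun y => p y / ρ y ^ γ) 0 x := by
  have hpow : 0 < ρ x ^ γ := Real.rpow_pos_of_pos hρx γ
  refine (hp.div (hρ.rpow_const (Or.inl hρx.ne')) hpow.ne').congr_deriv ?_
  rw [Real.rpow_sub_one hρx.ne']
  field_simp
  linear_combination hrel

theorem density_mul_enthalpy_deriv_eq {ρ u p h : ℝ → ℝ} {u' p' h' μ x : ℝ}
    (hu : HasDerivAt u u' x) (hp : HasDerivAt p p' x) (hh : HasDerivAt h h' x) (hux : u x ≠ 0)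
    (hmass : HasDerivAt (fun y => ρ y * u y) 0 x)
    (hmom : HasDerivAt (fun y => ρ y * u y ^ 2 + p y) (-(μ * ρ x * u x ^ 2)) x)
    (hener : HasDerivAt (fun y => ρ y * (u y ^ 2 / 2 + h y) * u y) (-(μ * ρ x * u x ^ 3)) x) :
    ρ x * h' = p' := by
  have hmomentum : ρ x * u x * u' + p' = -(μ * ρ x * u x ^ 2) := by
    have hmom' : HasDerivAt (fun y => ρ y * u y * u y + p y) (-(μ * ρ x * u x ^ 2)) x := by
      simpa only [sq, mul_assoc] using hmom
    linear_combination ((hmass.mul hu).add hp).unique hmom'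
  have henergy : ρ x * u x * (u x * u' + h') = -(μ * ρ x * u x ^ 3) := by
    have hener' : HasDerivAt (fun y => ρ y * u y * (u y ^ 2 / 2 + h y))
        (-(μ * ρ x * u x ^ 3)) x := by
      convert hener using 2 with y
      ring
    linear_combination (hmass.mul (((hu.pow 2).div_const 2).add hh)).unique hener'
  refine mul_left_cancel₀ hux ?_
  linear_combination henergy - u x * hmomentum

theorem pressure_deriv_mul_eq_of_enthalpy {ρ p : ℝ → ℝ} {ρ' p' h' γ x : ℝ}
    (hγ : γ ≠ 1) (hρx : ρ x ≠ 0) (hρ : HasDerivAt ρ ρ' x) (hp : HasDerivAt p p' x)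
    (hh : HasDerivAt (fun y => γ * p y / ((γ - 1) * ρ y)) h' x) (hgibbs : ρ x * h' = p') :
    p' * ρ x = γ * p x * ρ' := by
  have hγ1 : γ - 1 ≠ 0 := sub_ne_zero.2 hγ
  obtain rfl := ((hp.const_mul γ).div (hρ.const_mul (γ - 1)) (mul_ne_zero hγ1 hρx)).unique hh
  field_simp at hgibbs
  linear_combination hgibbs

theorem fanno_entropy_constant_general
    (γ μ L : ℝ) (hγ : 1 < γ)
    (ρ u p ρ' u' p' : ℝ → ℝ)
    (hρpos : ∀ x ∈ Set.Icc 0 L, 0 < ρ x)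
    (hupos : ∀ x ∈ Set.Icc 0 L, 0 < u x)
    (hρ : ∀ x ∈ Set.Icc 0 L, HasDerivAt ρ (ρ' x) x)
    (hu : ∀ x ∈ Set.Icc 0 L, HasDerivAt u (u' x) x)
    (hp : ∀ x ∈ Set.Icc 0 L, HasDerivAt p (p' x) x)
    (hmass : ∀ x ∈ Set.Icc 0 L, HasDerivAt (fun y => ρ y * u y) 0 x)
    (hmom : ∀ x ∈ Set.Icc 0 L,
      HasDerivAt (fun y => ρ y * (u y) ^ 2 + p y) (-(μ * ρ x * (u x) ^ 2)) x)
    (hener : ∀ x ∈ Set.Icc 0 L,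
      HasDerivAt (fun y => ρ y * ((u y) ^ 2 / 2 + γ * p y / ((γ - 1) * ρ y)) * u y)
        (-(μ * ρ x * (u x) ^ 3)) x) :
    ∀ x ∈ Set.Icc 0 L, HasDerivAt (fun y => p y / ρ y ^ γ) 0 x := by
  intro x hx
  have hρx : ρ x ≠ 0 := (hρpos x hx).ne'
  have henthalpy := ((hp x hx).const_mul γ).div ((hρ x hx).const_mul (γ - 1))
    (mul_ne_zero (sub_ne_zero.2 hγ.ne') hρx)
  have hgibbs := density_mul_enthalpy_deriv_eq (hu x hx) (hp x hx) henthalpy (hupos x hx).ne'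
    (hmass x hx) (hmom x hx) (hener x hx)
  exact hasDerivAt_div_rpow_eq_zero (hρpos x hx) (hp x hx) (hρ x hx)
    (pressure_deriv_mul_eq_of_enthalpy hγ.ne' hρx (hρ x hx) (hp x hx) henthalpy hgibbs)

theorem fanno_entropy_constant
    (γ μ L : ℝ) (hγ : 1 < γ) (hμ : 0 < μ)
    (ρ u p ρ' u' p' : ℝ → ℝ)
    (hρpos : ∀ x ∈ Set.Icc 0 L, 0 < ρ x)
    (hupos : ∀ x ∈ Set.Icc 0 L, 0 < u x)
    (hppos : ∀ x ∈ Set.Icc 0 L, 0 < p x)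
    (hρ : ∀ x ∈ Set.Icc 0 L, HasDerivAt ρ (ρ' x) x)
    (hu : ∀ x ∈ Set.Icc 0 L, HasDerivAt u (u' x) x)
    (hp : ∀ x ∈ Set.Icc 0 L, HasDerivAt p (p' x) x)
    (hM : ∀ x ∈ Set.Icc 0 L, ρ x * (u x) ^ 2 / (γ * p x) ≠ 1)
    (hmass : ∀ x ∈ Set.Icc 0 L, HasDerivAt (fun y => ρ y * u y) 0 x)
    (hmom : ∀ x ∈ Set.Icc 0 L,
      HasDerivAt (fun y => ρ y * (u y) ^ 2 + p y) (-(μ * ρ x * (u x) ^ 2)) x)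
    (hener : ∀ x ∈ Set.Icc 0 L,
      HasDerivAt (fun y => ρ y * ((u y) ^ 2 / 2 + γ * p y / ((γ - 1) * ρ y)) * u y)
        (-(μ * ρ x * (u x) ^ 3)) x) :
    ∀ x ∈ Set.Icc 0 L, HasDerivAt (fun y => p y / ρ y ^ γ) 0 x :=
  fanno_entropy_constant_general γ μ L hγ ρ u p ρ' u' p' hρpos hupos hρ hu hp hmass hmom hener
end

section
/- Let e₁ : [0,L] → ℝ be continuous with e₁(x) < 0 for all x, and let m ≥ 1 be an integer. If w ∈ C²([0,L]) solves e₁(x)w'' + m²w = 0 with w(0) = 1 and w'(0) = 0, then w(L) ≠ 0. -/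
theorem sCondition_mu_zero_nonvanishing
    (L : ℝ) (hL : 0 ≤ L)
    (e₁ : ℝ → ℝ) (he₁cont : ContinuousOn e₁ (Set.Icc 0 L))
    (he₁neg : ∀ x ∈ Set.Icc 0 L, e₁ x < 0)
    (m : ℕ) (hm : 1 ≤ m)
    (w w' w'' : ℝ → ℝ)
    (hw : ∀ x ∈ Set.Icc 0 L, HasDerivAt w (w' x) x)
    (hw' : ∀ x ∈ Set.Icc 0 L, HasDerivAt w' (w'' x) x)
    (hw''cont : ContinuousOn w'' (Set.Icc 0 L))
    (hode : ∀ x ∈ Set.Icc 0 L, e₁ x * w'' x + (m : ℝ) ^ 2 * w x = 0)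
    (h0 : w 0 = 1) (h0' : w' 0 = 0) :
    w L ≠ 0 := by
  intro hWL
  have hwcont : ContinuousOn w (Set.Icc 0 L) :=
    fun x hx => (hw x hx).continuousAt.continuousWithinAt
  have hw'cont : ContinuousOn w' (Set.Icc 0 L) :=
    fun x hx => (hw' x hx).continuousAt.continuousWithinAt
  -- the set of zeros of w
  set Z : Set ℝ := Set.Icc 0 L ∩ w ⁻¹' {0} with hZ
  have hZclosed : IsClosed Z :=
    hwcont.preimage_isClosed_of_isClosed isClosed_Icc isClosed_singleton
  have hZne : Z.Nonempty := ⟨L, ⟨Set.right_mem_Icc.mpr hL, hWL⟩⟩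
  have hZbdd : BddBelow Z := ⟨0, fun x hx => hx.1.1⟩
  set a : ℝ := sInf Z with ha
  have haZ : a ∈ Z := hZclosed.csInf_mem hZne hZbdd
  have haIcc : a ∈ Set.Icc 0 L := haZ.1
  have hwa : w a = 0 := haZ.2
  have hIccsub : Set.Icc 0 a ⊆ Set.Icc 0 L :=
    Set.Icc_subset_Icc le_rfl haIcc.2
  -- w is positive on [0, a)
  have hpos : ∀ t ∈ Set.Ico (0:ℝ) a, 0 < w t := by
    intro t ht
    by_contra hle
    push_neg at hle
    have hcont' : ContinuousOn w (Set.Icc 0 t) :=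
      hwcont.mono (Set.Icc_subset_Icc le_rfl (ht.2.le.trans haIcc.2))
    have : (0:ℝ) ∈ Set.Icc (w t) (w 0) := ⟨hle, by rw [h0]; norm_num⟩
    obtain ⟨c, hc, hwc⟩ := intermediate_value_Icc' ht.1 hcont' this
    have hcZ : c ∈ Z := ⟨Set.Icc_subset_Icc le_rfl (ht.2.le.trans haIcc.2) hc, hwc⟩
    have : a ≤ c := csInf_le hZbdd hcZ
    linarith [hc.2, ht.2]
  -- w is nonnegative on [0, a]
  have hnonneg : ∀ t ∈ Set.Icc 0 a, 0 ≤ w t := by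
    intro t ht
    rcases eq_or_lt_of_le ht.2 with h | h
    · rw [h, hwa]
    · exact (hpos t ⟨ht.1, h⟩).le
  -- hence w'' ≥ 0 on [0, a]
  have hw''nonneg : ∀ t ∈ Set.Icc 0 a, 0 ≤ w'' t := by
    intro t ht
    have h1 := hode t (hIccsub ht)
    have h2 := he₁neg t (hIccsub ht)
    have h3 := hnonneg t ht
    nlinarith [mul_nonneg (sq_nonneg ((m:ℝ))) h3]
  -- w' is monotone on [0, a]
  have hmono' : MonotoneOn w' (Set.Icc 0 a) := by
    apply monotoneOn_of_deriv_nonneg (convex_Icc 0 a)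
      (hw'cont.mono hIccsub)
    · intro x hx
      rw [interior_Icc] at hx
      exact ((hw' x (hIccsub ⟨hx.1.le, hx.2.le⟩)).differentiableAt).differentiableWithinAt
    · intro x hx
      rw [interior_Icc] at hx
      have hxIcc : x ∈ Set.Icc 0 a := ⟨hx.1.le, hx.2.le⟩
      rw [(hw' x (hIccsub hxIcc)).deriv]
      exact hw''nonneg x hxIcc
  -- hence w' ≥ 0 on [0, a]
  have hw'nonneg : ∀ t ∈ Set.Icc 0 a, 0 ≤ w' t := by
    intro t ht
    have := hmono' (Set.left_mem_Icc.mpr haIcc.1) ht ht.1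
    rwa [h0'] at this
  -- hence w is monotone on [0, a]
  have hmono : MonotoneOn w (Set.Icc 0 a) := by
    apply monotoneOn_of_deriv_nonneg (convex_Icc 0 a)
      (hwcont.mono hIccsub)
    · intro x hx
      rw [interior_Icc] at hx
      exact ((hw x (hIccsub ⟨hx.1.le, hx.2.le⟩)).differentiableAt).differentiableWithinAt
    · intro x hx
      rw [interior_Icc] at hx
      have hxIcc : x ∈ Set.Icc 0 a := ⟨hx.1.le, hx.2.le⟩
      rw [(hw x (hIccsub hxIcc)).deriv]
      exact hw'nonneg x hxIcc
  have : w 0 ≤ w a :=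
    hmono (Set.left_mem_Icc.mpr haIcc.1) (Set.right_mem_Icc.mpr haIcc.1) haIcc.1
  rw [h0, hwa] at this
  linarith
end
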